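/- Let K ≥ 2, M, N, L ≥ 1 be integers with L ≥ KM - N and L ≥ N and KM > N. Define Δ_dep(p) = min(p(KM-N), (1-p)N) and Δ_ind(p) = min(pKM, N) - Σ_{i=0}^{K} B_K(i) min(iM, N), where B_K(i) = C(K,i) p^i (1-p)^{K-i}. Then Δ_dep(p) > Δ_ind(p) for all p ∈ (0,1). -/

import Mathlib

/-!
Write `S = ∑ᵢ B_K(i) min(iM, N)` for the expected sum-DoF without a relay. On `[0, K]` the concave
function `x ↦ min(xM, N)` lies above its chord `x ↦ xN/K` (as `N ≤ KM`), strictly at `x = 1`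
(as `N < KM` and `K ≥ 2`), so taking binomial expectations gives `S > pN`. Hence
`Δ_ind = min(pKM, N) - S < min(pKM, N) - pN = min(p(KM - N), (1 - p)N) = Δ_dep`.
-/

noncomputable def binPMF (K : ℕ) (i : ℤ) (p : ℝ) : ℝ :=
  if 0 ≤ i then (K.choose i.toNat : ℝ) * p ^ i.toNat * (1 - p) ^ (K - i.toNat) else 0

open Finset

lemma binPMF_natCast (K i : ℕ) (p : ℝ) :
    binPMF K i p = (K.choose i : ℝ) * p ^ i * (1 - p) ^ (K - i) := by
  simp [binPMF]

lemma sum_binPMF_mul_natCast (K : ℕ) (p : ℝ) :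
    ∑ i ∈ range (K + 1), binPMF K i p * i = K * p := by
  have h := congrArg (Polynomial.eval p) (bernsteinPolynomial.sum_smul (R := ℝ) K)
  simpa [Polynomial.eval_finsetSum, bernsteinPolynomial, binPMF_natCast, mul_comm] using h

lemma mul_le_mul_min {x K M N : ℝ} (hx : 0 ≤ x) (hxK : x ≤ K) (hN : 0 ≤ N)
    (hNKM : N ≤ K * M) : x * N ≤ K * min (x * M) N := by
  rw [mul_min_of_nonneg _ _ (hx.trans hxK)]
  exact le_min (by nlinarith) (by nlinarith)

lemma mul_lt_mul_min {x K M N : ℝ} (hx : 0 < x) (hxK : x < K) (hN : 0 < N)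
    (hNKM : N < K * M) : x * N < K * min (x * M) N := by
  rw [mul_min_of_nonneg _ _ (hx.trans hxK).le]
  exact lt_min (by nlinarith) (by nlinarith)

lemma mul_lt_sum_binPMF_mul_min {K : ℕ} {M N p : ℝ} (hK : 2 ≤ K) (hN : 0 < N)
    (hNKM : N < K * M) (hp : p ∈ Set.Ioo (0 : ℝ) 1) :
    p * N < ∑ i ∈ range (K + 1), binPMF K i p * min (i * M) N := by
  obtain ⟨hp0, hp1⟩ := hp
  have hq0 := sub_pos.2 hp1
  have hB : ∀ i : ℕ, 0 ≤ binPMF K i p := fun i ↦ by rw [binPMF_natCast]; positivity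
  have hB1 : 0 < binPMF K 1 p := by
    rw [← Nat.cast_one, binPMF_natCast, Nat.choose_one_right]; positivity
  refine lt_of_mul_lt_mul_left ?_ (K.cast_nonneg : (0 : ℝ) ≤ K)
  calc (K : ℝ) * (p * N) = ∑ i ∈ range (K + 1), binPMF K i p * (i * N) := by
        simp_rw [← mul_assoc]
        rw [← sum_mul, sum_binPMF_mul_natCast]
    _ < ∑ i ∈ range (K + 1), binPMF K i p * (K * min (i * M) N) := by
        refine sum_lt_sum (fun i hi ↦ ?_) ⟨1, by simp; omega, ?_⟩
        · have hiK : (i : ℝ) ≤ K := by exact_mod_cast Nat.lt_succ_iff.mp (mem_range.mp hi)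
          exact mul_le_mul_of_nonneg_left
            (mul_le_mul_min i.cast_nonneg hiK hN.le hNKM.le) (hB i)
        · have h1K : ((1 : ℕ) : ℝ) < K := by exact_mod_cast hK
          exact mul_lt_mul_of_pos_left (mul_lt_mul_min (by simp) h1K hN hNKM) hB1
    _ = K * ∑ i ∈ range (K + 1), binPMF K i p * min (i * M) N := by
        rw [mul_sum]
        exact sum_congr rfl fun i _ ↦ by ring

theorem dep_gain_gt_ind_gain_general (K M N : ℕ) (hK : 2 ≤ K) (hN : 1 ≤ N)
    (h : N < K * M)
    (p : ℝ) (hp : p ∈ Set.Ioo (0:ℝ) 1) :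
    min (p * (K : ℝ) * M) (N : ℝ)
        - ∑ i ∈ Finset.range (K+1), binPMF K (i : ℤ) p * min ((i : ℝ) * M) (N : ℝ)
      < min (p * ((K : ℝ) * M - N)) ((1 - p) * N) := by
  have hS := mul_lt_sum_binPMF_mul_min (M := M) (N := N) hK
    (by exact_mod_cast hN) (by exact_mod_cast h) hp
  calc min (p * (K : ℝ) * M) (N : ℝ)
        - ∑ i ∈ Finset.range (K+1), binPMF K (i : ℤ) p * min ((i : ℝ) * M) (N : ℝ)
      < min (p * (K : ℝ) * M) N - p * N := sub_lt_sub_left hS _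
    _ = min (p * ((K : ℝ) * M - N)) ((1 - p) * N) := by
      rw [← min_sub_sub_right]
      congr 1 <;> ring

theorem dep_gain_gt_ind_gain (K M N L : ℕ) (hK : 2 ≤ K) (hM : 1 ≤ M) (hN : 1 ≤ N)
    (hL : 1 ≤ L) (hL1 : K * M ≤ N + L) (hL2 : N ≤ L) (h : N < K * M)
    (p : ℝ) (hp : p ∈ Set.Ioo (0:ℝ) 1) :
    min (p * (K : ℝ) * M) (N : ℝ)
        - ∑ i ∈ Finset.range (K+1), binPMF K (i : ℤ) p * min ((i : ℝ) * M) (N : ℝ)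
      < min (p * ((K : ℝ) * M - N)) ((1 - p) * N) :=
  dep_gain_gt_ind_gain_general K M N hK hN h p hp
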